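/- arXiv:1310.1580 — 6 statements merged into one kernel-verified Lean document; each statement's English description precedes it below -/
import Mathlib

section
/- Define a sequence $d : \mathbb{N} \to \mathbb{Z}$ by $d(1) = m_1 > 0$, $d(2) = m_2 > 0$ with $m_1 \ge m_2$, and $d(i+1) = \delta d(i) - d(i-1)$ for $i \ge 2$, where $\delta \ge 1$ is an integer satisfying $m_1^2 + m_2^2 - \delta m_1 m_2 > 0$. Then there exists $k \ge 3$ such that $d(k-1) > 0$ and $d(k) \le 0$. -/
/-!
The quadratic form `Δ(a, b) = a² + b² - δab` is invariant under the step `(a, b) ↦ (b, δb - a)`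
of the recursion. If `0 < b ≤ a` and `Δ(a, b) > 0`, then `δb - a < b`, since otherwise
`Δ(a, b) = a(a - δb) + b² ≤ b(b - a) ≤ 0`. Hence as long as the terms stay positive they
strictly decrease, which a sequence of positive integers cannot do forever.
-/

def moriForm (δ a b : ℤ) : ℤ := a ^ 2 + b ^ 2 - δ * a * b

lemma moriForm_step (δ a b : ℤ) : moriForm δ b (δ * b - a) = moriForm δ a b := by
  unfold moriForm; ring

lemma sub_lt_of_moriForm_pos {δ a b : ℤ} (hb : 0 < b) (hab : b ≤ a)
    (hΔ : 0 < moriForm δ a b) : δ * b - a < b := by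
  by_contra! h
  have hfactor : moriForm δ a b = a * (a - δ * b) + b ^ 2 := by unfold moriForm; ring
  nlinarith [mul_le_mul_of_nonneg_left (show a - δ * b ≤ -b by linarith) (hb.le.trans hab)]

lemma mori_descent {δ : ℤ} {d : ℕ → ℤ} (hrec : ∀ j, d (j + 3) = δ * d (j + 2) - d (j + 1))
    (hpos : ∀ j, 0 < d (j + 2) → 0 < d (j + 3)) (h2 : 0 < d 2) (h12 : d 2 ≤ d 1)
    (hΔ : 0 < moriForm δ (d 1) (d 2)) (j : ℕ) :
    0 < d (j + 2) ∧ d (j + 2) ≤ d (j + 1) ∧ 0 < moriForm δ (d (j + 1)) (d (j + 2)) ∧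
      d (j + 2) + j ≤ d 2 := by
  induction j with
  | zero => exact ⟨h2, h12, hΔ, by simp⟩
  | succ j ih =>
    obtain ⟨hb, hab, hΔj, hbound⟩ := ih
    have hlt : d (j + 3) < d (j + 2) := hrec j ▸ sub_lt_of_moriForm_pos hb hab hΔj
    refine ⟨hpos j hb, hlt.le, ?_, by push_cast; linarith⟩
    rwa [hrec, moriForm_step]

theorem stmt2_general (δ m1 m2 : ℤ) (hm2 : 0 < m2) (hm12 : m2 ≤ m1)
    (hΔ : 0 < m1 ^ 2 + m2 ^ 2 - δ * m1 * m2)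
    (d : ℕ → ℤ) (hd1 : d 1 = m1) (hd2 : d 2 = m2)
    (hrec : ∀ i, 2 ≤ i → d (i + 1) = δ * d i - d (i - 1)) :
    ∃ k, 3 ≤ k ∧ 0 < d (k - 1) ∧ d k ≤ 0 := by
  by_contra! hcon
  subst hd1 hd2
  obtain ⟨hpos, -, -, hbound⟩ :=
    mori_descent (fun j => hrec (j + 2) (by omega)) (fun j => hcon (j + 3) (by omega))
      hm2 hm12 hΔ (d 2).toNat
  rw [Int.toNat_of_nonneg hm2.le] at hbound
  linarith

/-- Termination of Mori's division algorithm: the sequence `d` with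
`d 1 = m₁ ≥ d 2 = m₂ > 0` and `d (i+1) = δ * d i - d (i-1)` eventually becomes nonpositive. -/
theorem stmt2 (δ m1 m2 : ℤ) (hδ : 1 ≤ δ) (hm2 : 0 < m2) (hm12 : m2 ≤ m1)
    (hΔ : 0 < m1 ^ 2 + m2 ^ 2 - δ * m1 * m2)
    (d : ℕ → ℤ) (hd1 : d 1 = m1) (hd2 : d 2 = m2)
    (hrec : ∀ i, 2 ≤ i → d (i + 1) = δ * d i - d (i - 1)) :
    ∃ k, 3 ≤ k ∧ 0 < d (k - 1) ∧ d k ≤ 0 :=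
  stmt2_general δ m1 m2 hm2 hm12 hΔ d hd1 hd2 hrec
end

section
/- Let $m_1, m_2, a_1, a_2 \in \mathbb{N}$ with $1 \le a_i \le m_i$, $\gcd(a_i, m_i) = 1$, $\delta := m_1 a_2 + m_2 a_1 - m_1 m_2 > 0$, $\Delta := m_1^2 + m_2^2 - \delta m_1 m_2 > 0$. For an index $j$ define $m_1^j = d(j)$, $m_2^j = d(j+1)$, $a_1^j = c(j)$, $a_2^j = m_2^j - c(j+1)$, where $c$ satisfies the same recursion $c(i-1) + c(i+1) = \delta c(i)$ with $c(1) = a_1$, $c(2) = m_2 - a_2$. Then $m_1^j a_2^j + m_2^j a_1^j - m_1^j m_2^j = \delta$ and $(m_1^j)^2 + (m_2^j)^2 - \delta m_1^j m_2^j = \Delta$, provided $d(j), d(j+1) > 0$. -/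
/-!
Both invariants are conserved quantities of the linear recurrence `x i + x (i + 2) = δ * x (i + 1)`:
the quadratic form `x i ^ 2 + x (i + 1) ^ 2 - δ * x i * x (i + 1)` of one solution, and the
Casoratian `x (i + 1) * y i - x i * y (i + 1)` of two solutions. Evaluated at the mutated data
they are `Δ` and `δ`, and at `j = 1` they are read off the initial data.
-/

section LinearRecurrence

variable {R : Type*} [CommRing R] {δ : R} {x y : ℕ → R}

theorem sq_add_sq_sub_mul_eq_of_recurrence (hx : ∀ i, x i + x (i + 2) = δ * x (i + 1))
    (i : ℕ) :
    x i ^ 2 + x (i + 1) ^ 2 - δ * x i * x (i + 1) = x 0 ^ 2 + x 1 ^ 2 - δ * x 0 * x 1 := by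
  induction i with
  | zero => rfl
  | succ i ih => rw [← ih]; linear_combination (x (i + 2) - x i) * hx i

theorem casoratian_eq_of_recurrence (hx : ∀ i, x i + x (i + 2) = δ * x (i + 1))
    (hy : ∀ i, y i + y (i + 2) = δ * y (i + 1)) (i : ℕ) :
    x (i + 1) * y i - x i * y (i + 1) = x 1 * y 0 - x 0 * y 1 := by
  induction i with
  | zero => rfl
  | succ i ih => rw [← ih]; linear_combination y (i + 1) * hx i - x (i + 1) * hy i

end LinearRecurrence

theorem stmt4_general (m1 m2 a1 a2 : ℕ) (δ Δ : ℤ)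
    (hδ : δ = (m1 : ℤ) * a2 + (m2 : ℤ) * a1 - (m1 : ℤ) * m2)
    (hΔ : Δ = (m1 : ℤ) ^ 2 + (m2 : ℤ) ^ 2 - δ * m1 * m2)
    (d c : ℕ → ℤ) (hd1 : d 1 = m1) (hd2 : d 2 = m2)
    (hc1 : c 1 = a1) (hc2 : c 2 = (m2 : ℤ) - a2)
    (hdrec : ∀ i, d i + d (i + 2) = δ * d (i + 1))
    (hcrec : ∀ i, c i + c (i + 2) = δ * c (i + 1))
    (j : ℕ) :
    d j * (d (j + 1) - c (j + 1)) + d (j + 1) * c j - d j * d (j + 1) = δ ∧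
    d j ^ 2 + d (j + 1) ^ 2 - δ * d j * d (j + 1) = Δ := by
  have casoratian := (casoratian_eq_of_recurrence hdrec hcrec j).trans
    (casoratian_eq_of_recurrence hdrec hcrec 1).symm
  have quadratic := (sq_add_sq_sub_mul_eq_of_recurrence hdrec j).trans
    (sq_add_sq_sub_mul_eq_of_recurrence hdrec 1).symm
  rw [hd1, hd2, hc1, hc2] at casoratian
  rw [hd1, hd2] at quadratic
  constructor
  · linear_combination casoratian - hδ
  · linear_combination quadratic - hΔ

/-- Mutation of the k2A data `(m₁, m₂, a₁, a₂)` along the recursions preserves the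
invariants `δ` and `Δ`. Here `m₁ʲ = d j`, `m₂ʲ = d (j+1)`, `a₁ʲ = c j`,
`a₂ʲ = d (j+1) - c (j+1)`. -/
theorem stmt4 (m1 m2 a1 a2 : ℕ) (δ Δ : ℤ)
    (ha1 : 1 ≤ a1) (ha1m : a1 ≤ m1) (ha2 : 1 ≤ a2) (ha2m : a2 ≤ m2)
    (hg1 : Nat.gcd a1 m1 = 1) (hg2 : Nat.gcd a2 m2 = 1)
    (hδ : δ = (m1 : ℤ) * a2 + (m2 : ℤ) * a1 - (m1 : ℤ) * m2) (hδpos : 0 < δ)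
    (hΔ : Δ = (m1 : ℤ) ^ 2 + (m2 : ℤ) ^ 2 - δ * m1 * m2) (hΔpos : 0 < Δ)
    (d c : ℕ → ℤ) (hd1 : d 1 = m1) (hd2 : d 2 = m2)
    (hc1 : c 1 = a1) (hc2 : c 2 = (m2 : ℤ) - a2)
    (hdrec : ∀ i, d i + d (i + 2) = δ * d (i + 1))
    (hcrec : ∀ i, c i + c (i + 2) = δ * c (i + 1))
    (j : ℕ) (hj : 1 ≤ j) (hdj : 0 < d j) (hdj1 : 0 < d (j + 1)) :
    d j * (d (j + 1) - c (j + 1)) + d (j + 1) * c j - d j * d (j + 1) = δ ∧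
    d j ^ 2 + d (j + 1) ^ 2 - δ * d j * d (j + 1) = Δ :=
  stmt4_general m1 m2 a1 a2 δ Δ hδ hΔ d c hd1 hd2 hc1 hc2 hdrec hcrec j
end

section
/- With $d(j), d(j+1) > 0$, $m_i^j$ and $a_i^j$ defined as above (from sequences $d, c$ with $d(1)=m_1, d(2)=m_2, c(1)=a_1, c(2)=m_2-a_2$ and recursion $x(i+1) = \delta x(i) - x(i-1)$), we have $1 \le a_i^j \le m_i^j$ and $\gcd(a_i^j, m_i^j) = 1$ for $i = 1, 2$. -/
/-!
The mutation `(m₁, m₂, a₁, a₂) ↦ (m₂, m₃, m₂ - a₂, a₃)`, with `m₃ = δ m₂ - m₁` and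
`a₃ = δ a₂ + a₁ - m₁`, preserves `δ` and `Δ = m₁² + m₂² - δ m₁ m₂`, so `Δ > 0` forces
`δ < m₂ + m₃` when `m₃ > 0`; together with `m₂ a₃ = a₂ m₃ + δ` this gives `1 ≤ a₃ ≤ m₃`, and
the same identity shows that a common divisor of `a₃, m₃` divides `m₁` and `a₁`. Reading the sequences `d, c` as iterated
mutations, every index with `d j, d (j + 1) > 0` is reached from `j = 1` through positive pairs:
for `δ ≥ 2`, everything before a nonpositive entry followed by a larger one is nonpositive, so
`d (j - 1) > 0`; for `δ = 1` the sequences are `6`-periodic and the pair at `j = 0` is obtained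
by mutating backwards.
-/

structure IsMoriQuadruple (δ m₁ m₂ a₁ a₂ : ℤ) : Prop where
  one_le_a₁ : 1 ≤ a₁
  a₁_le_m₁ : a₁ ≤ m₁
  one_le_a₂ : 1 ≤ a₂
  a₂_le_m₂ : a₂ ≤ m₂
  gcd_a₁_m₁ : Int.gcd a₁ m₁ = 1
  gcd_a₂_m₂ : Int.gcd a₂ m₂ = 1
  delta_eq : δ = m₁ * a₂ + m₂ * a₁ - m₁ * m₂
  delta_pos : 0 < δ
  disc_pos : 0 < m₁ ^ 2 + m₂ ^ 2 - δ * m₁ * m₂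

lemma lt_add_of_disc_pos {δ x y : ℤ} (hx : 0 < x) (hy : 0 < y)
    (h : 0 < x ^ 2 + y ^ 2 - δ * x * y) : δ < x + y := by
  by_contra! hδ
  nlinarith [mul_le_mul_of_nonneg_right hδ (mul_pos hx hy).le]

namespace IsMoriQuadruple

variable {δ m₁ m₂ a₁ a₂ : ℤ}

lemma swap (h : IsMoriQuadruple δ m₁ m₂ a₁ a₂) : IsMoriQuadruple δ m₂ m₁ a₂ a₁ where
  one_le_a₁ := h.one_le_a₂
  a₁_le_m₁ := h.a₂_le_m₂
  one_le_a₂ := h.one_le_a₁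
  a₂_le_m₂ := h.a₁_le_m₁
  gcd_a₁_m₁ := h.gcd_a₂_m₂
  gcd_a₂_m₂ := h.gcd_a₁_m₁
  delta_eq := by rw [h.delta_eq]; ring
  delta_pos := h.delta_pos
  disc_pos := by linarith [h.disc_pos]

lemma a₂_lt_m₂ (h : IsMoriQuadruple δ m₁ m₂ a₁ a₂) (hm₃ : 0 < δ * m₂ - m₁) : a₂ < m₂ := by
  refine lt_of_le_of_ne h.a₂_le_m₂ fun ha₂ => ?_
  have hg := h.gcd_a₂_m₂
  rw [ha₂, Int.gcd_self] at hg
  have hm₂ : m₂ = 1 := by have := h.one_le_a₂; omega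
  have := h.delta_eq
  subst hm₂ ha₂
  linarith [h.a₁_le_m₁]

lemma mutate (h : IsMoriQuadruple δ m₁ m₂ a₁ a₂) (hm₃ : 0 < δ * m₂ - m₁) :
    IsMoriQuadruple δ m₂ (δ * m₂ - m₁) (m₂ - a₂) (δ * a₂ + a₁ - m₁) := by
  set m₃ := δ * m₂ - m₁
  set a₃ := δ * a₂ + a₁ - m₁
  have ha₂ := h.a₂_lt_m₂ hm₃
  have hm₂ : 0 < m₂ := by linarith [h.one_le_a₂]
  have key : m₂ * a₃ = a₂ * m₃ + δ := by simp only [a₃, m₃, h.delta_eq]; ring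
  have disc : 0 < m₂ ^ 2 + m₃ ^ 2 - δ * m₂ * m₃ := by
    convert h.disc_pos using 1; simp only [m₃]; ring
  have ha₃ : 0 < a₃ :=
    pos_of_mul_pos_right (key ▸ add_pos (mul_pos (by linarith [h.one_le_a₂]) hm₃) h.delta_pos)
      hm₂.le
  have ha₃m₃ : a₃ < m₃ + 1 := by
    refine lt_of_mul_lt_mul_left ?_ hm₂.le
    calc m₂ * a₃ = a₂ * m₃ + δ := key
      _ < a₂ * m₃ + m₂ + m₃ := by linarith [lt_add_of_disc_pos hm₂ hm₃ disc]
      _ ≤ (m₂ - 1) * m₃ + m₂ + m₃ := by gcongr; linarith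
      _ = m₂ * (m₃ + 1) := by ring
  have gcd_a₃_m₃ : Int.gcd a₃ m₃ = 1 := by
    have hdvd : ∀ g : ℤ, g ∣ a₃ → g ∣ m₃ → g ∣ a₁ ∧ g ∣ m₁ := by
      intro g hga hgm
      have hgδ : g ∣ δ := by
        rw [show δ = m₂ * a₃ - a₂ * m₃ by linarith]
        exact (hga.mul_left _).sub (hgm.mul_left _)
      have hgm₁ : g ∣ m₁ := by
        rw [show m₁ = δ * m₂ - m₃ by simp only [m₃]; ring]
        exact (hgδ.mul_right _).sub hgm
      refine ⟨?_, hgm₁⟩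
      rw [show a₁ = a₃ - δ * a₂ + m₁ by simp only [a₃]; ring]
      exact (hga.sub (hgδ.mul_right _)).add hgm₁
    obtain ⟨ha₁, hm₁⟩ := hdvd _ (Int.gcd_dvd_left a₃ m₃) (Int.gcd_dvd_right a₃ m₃)
    exact Nat.dvd_one.mp (h.gcd_a₁_m₁ ▸ Int.dvd_gcd ha₁ hm₁)
  exact
    { one_le_a₁ := by linarith
      a₁_le_m₁ := by linarith [h.one_le_a₂]
      one_le_a₂ := ha₃
      a₂_le_m₂ := by linarith
      gcd_a₁_m₁ := by rw [Int.gcd_self_sub_left]; exact h.gcd_a₂_m₂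
      gcd_a₂_m₂ := gcd_a₃_m₃
      delta_eq := by simp only [a₃, m₃]; rw [h.delta_eq]; ring
      delta_pos := h.delta_pos
      disc_pos := disc }

end IsMoriQuadruple

section Sequences

variable {δ : ℤ} {d c x : ℕ → ℤ}

def IsMoriAt (δ : ℤ) (d c : ℕ → ℤ) (j : ℕ) : Prop :=
  IsMoriQuadruple δ (d j) (d (j + 1)) (c j) (d (j + 1) - c (j + 1))

lemma IsMoriAt.succ (hd : ∀ i, d i + d (i + 2) = δ * d (i + 1))
    (hc : ∀ i, c i + c (i + 2) = δ * c (i + 1)) {j : ℕ} (h : IsMoriAt δ d c j)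
    (hpos : 0 < d (j + 2)) : IsMoriAt δ d c (j + 1) := by
  have h' := IsMoriQuadruple.mutate h (by linarith [hd j])
  rwa [show δ * d (j + 1) - d j = d (j + 2) by linarith [hd j], sub_sub_cancel,
    show δ * (d (j + 1) - c (j + 1)) + c j - d j = d (j + 2) - c (j + 2) by
      linarith [hd j, hc j]] at h'

lemma IsMoriAt.pred (hd : ∀ i, d i + d (i + 2) = δ * d (i + 1))
    (hc : ∀ i, c i + c (i + 2) = δ * c (i + 1)) {j : ℕ} (h : IsMoriAt δ d c (j + 1))
    (hpos : 0 < d j) : IsMoriAt δ d c j := by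
  have h' := IsMoriQuadruple.swap h |>.mutate (by linarith [hd j])
  rw [show δ * d (j + 1) - d (j + 1 + 1) = d j by linarith [hd j],
    show δ * c (j + 1) + (d (j + 1 + 1) - c (j + 1 + 1)) - d (j + 1 + 1) = c j by
      linarith [hc j]] at h'
  exact h'.swap

lemma le_zero_of_le_zero_of_lt_succ (hx : ∀ i, x i + x (i + 2) = δ * x (i + 1)) (hδ : 2 ≤ δ)
    {i k : ℕ} (hik : i ≤ k) (hk : x k ≤ 0) (hk' : x k < x (k + 1)) : x i ≤ 0 := by
  refine (Nat.decreasingInduction (motive := fun m _ => x m ≤ 0 ∧ x m < x (m + 1))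
    (fun m _ ih => ?_) ⟨hk, hk'⟩ hik).1
  have := hx m
  constructor <;> nlinarith [ih.1, ih.2]

lemma antiperiodic_of_delta_eq_one (hx : ∀ i, x i + x (i + 2) = δ * x (i + 1)) (hδ : δ = 1) :
    Function.Antiperiodic x 3 := fun i => by
  have h₀ := hx i
  have h₁ := hx (i + 1)
  subst hδ
  simp only [add_assoc, Nat.reduceAdd] at h₀ h₁ ⊢
  linarith

lemma periodic_of_delta_eq_one (hx : ∀ i, x i + x (i + 2) = δ * x (i + 1)) (hδ : δ = 1) :
    Function.Periodic x 6 := by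
  simpa using (antiperiodic_of_delta_eq_one hx hδ).periodic_two_mul

lemma IsMoriAt.add_six (hd₆ : Function.Periodic d 6) (hc₆ : Function.Periodic c 6) {j : ℕ}
    (h : IsMoriAt δ d c j) : IsMoriAt δ d c (j + 6) := by
  unfold IsMoriAt
  rwa [hd₆, hc₆, show j + 6 + 1 = j + 1 + 6 by ring, hd₆, hc₆]

theorem isMoriAt_of_pos (hd : ∀ i, d i + d (i + 2) = δ * d (i + 1))
    (hc : ∀ i, c i + c (i + 2) = δ * c (i + 1)) (h₁ : IsMoriAt δ d c 1) :
    ∀ j, 0 < d j → 0 < d (j + 1) → IsMoriAt δ d c j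
  | 0, h₀, _ => h₁.pred hd hc h₀
  | 1, _, _ => h₁
  | k + 2, hk, hk₁ => by
    by_cases hprev : 0 < d (k + 1)
    · exact (isMoriAt_of_pos hd hc h₁ (k + 1) hprev hk).succ hd hc hk₁
    have hd₁ : 0 < d 1 := by linarith [h₁.one_le_a₁, h₁.a₁_le_m₁]
    have hd₂ : 0 < d 2 := by linarith [h₁.one_le_a₂, h₁.a₂_le_m₂]
    obtain hδ | hδ : 2 ≤ δ ∨ δ = 1 := by have := h₁.delta_pos; omega
    · have := le_zero_of_le_zero_of_lt_succ hd hδ (Nat.le_add_left 1 k) (not_lt.1 hprev)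
        (by linarith)
      linarith
    rcases lt_or_ge k 4 with hk4 | hk4
    · -- one period of `d` is `m₁, m₂, m₂ - m₁, -m₁, -m₂, m₁ - m₂`
      have hd₃ := antiperiodic_of_delta_eq_one hd hδ
      interval_cases k
      · exact absurd hd₁ hprev
      · exact absurd hd₂ hprev
      · linarith [hd₃ 1]
      · linarith [hd₃ 2]
    · obtain ⟨n, rfl⟩ := Nat.exists_eq_add_of_le' hk4
      have hd₆ := periodic_of_delta_eq_one hd hδ
      rw [show n + 4 + 2 = n + 6 by ring, hd₆] at hk
      rw [show n + 4 + 2 + 1 = n + 1 + 6 by ring, hd₆] at hk₁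
      exact (isMoriAt_of_pos hd hc h₁ n hk hk₁).add_six hd₆ (periodic_of_delta_eq_one hc hδ)

end Sequences

theorem stmt5_general (m1 m2 a1 a2 : ℕ) (δ Δ : ℤ)
    (ha1 : 1 ≤ a1) (ha1m : a1 ≤ m1) (ha2 : 1 ≤ a2) (ha2m : a2 ≤ m2)
    (hg1 : Nat.gcd a1 m1 = 1) (hg2 : Nat.gcd a2 m2 = 1)
    (hδ : δ = (m1 : ℤ) * a2 + (m2 : ℤ) * a1 - (m1 : ℤ) * m2) (hδpos : 0 < δ)
    (hΔ : Δ = (m1 : ℤ) ^ 2 + (m2 : ℤ) ^ 2 - δ * m1 * m2) (hΔpos : 0 < Δ)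
    (d c : ℕ → ℤ) (hd1 : d 1 = m1) (hd2 : d 2 = m2)
    (hc1 : c 1 = a1) (hc2 : c 2 = (m2 : ℤ) - a2)
    (hdrec : ∀ i, d i + d (i + 2) = δ * d (i + 1))
    (hcrec : ∀ i, c i + c (i + 2) = δ * c (i + 1))
    (j : ℕ) (hdj : 0 < d j) (hdj1 : 0 < d (j + 1)) :
    (1 ≤ c j ∧ c j ≤ d j ∧ Int.gcd (c j) (d j) = 1) ∧
    (1 ≤ d (j + 1) - c (j + 1) ∧ d (j + 1) - c (j + 1) ≤ d (j + 1) ∧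
      Int.gcd (d (j + 1) - c (j + 1)) (d (j + 1)) = 1) := by
  have h₁ : IsMoriAt δ d c 1 := by
    show IsMoriQuadruple δ (d 1) (d 2) (c 1) (d 2 - c 2)
    rw [hd1, hd2, hc1, hc2, sub_sub_cancel]
    exact
      { one_le_a₁ := by exact_mod_cast ha1
        a₁_le_m₁ := by exact_mod_cast ha1m
        one_le_a₂ := by exact_mod_cast ha2
        a₂_le_m₂ := by exact_mod_cast ha2m
        gcd_a₁_m₁ := by rwa [Int.gcd_natCast_natCast]
        gcd_a₂_m₂ := by rwa [Int.gcd_natCast_natCast]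
        delta_eq := hδ
        delta_pos := hδpos
        disc_pos := hΔ ▸ hΔpos }
  have h := isMoriAt_of_pos hdrec hcrec h₁ j hdj hdj1
  exact ⟨⟨h.one_le_a₁, h.a₁_le_m₁, h.gcd_a₁_m₁⟩, ⟨h.one_le_a₂, h.a₂_le_m₂, h.gcd_a₂_m₂⟩⟩

/-- The mutated k2A data `m₁ʲ = d j`, `m₂ʲ = d (j+1)`, `a₁ʲ = c j`, `a₂ʲ = d (j+1) - c (j+1)`
again satisfies `1 ≤ aᵢʲ ≤ mᵢʲ` and `gcd(aᵢʲ, mᵢʲ) = 1`. -/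
theorem stmt5 (m1 m2 a1 a2 : ℕ) (δ Δ : ℤ)
    (ha1 : 1 ≤ a1) (ha1m : a1 ≤ m1) (ha2 : 1 ≤ a2) (ha2m : a2 ≤ m2)
    (hg1 : Nat.gcd a1 m1 = 1) (hg2 : Nat.gcd a2 m2 = 1)
    (hδ : δ = (m1 : ℤ) * a2 + (m2 : ℤ) * a1 - (m1 : ℤ) * m2) (hδpos : 0 < δ)
    (hΔ : Δ = (m1 : ℤ) ^ 2 + (m2 : ℤ) ^ 2 - δ * m1 * m2) (hΔpos : 0 < Δ)
    (d c : ℕ → ℤ) (hd1 : d 1 = m1) (hd2 : d 2 = m2)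
    (hc1 : c 1 = a1) (hc2 : c 2 = (m2 : ℤ) - a2)
    (hdrec : ∀ i, d i + d (i + 2) = δ * d (i + 1))
    (hcrec : ∀ i, c i + c (i + 2) = δ * c (i + 1))
    (j : ℕ) (hj : 1 ≤ j) (hdj : 0 < d j) (hdj1 : 0 < d (j + 1)) :
    (1 ≤ c j ∧ c j ≤ d j ∧ Int.gcd (c j) (d j) = 1) ∧
    (1 ≤ d (j + 1) - c (j + 1) ∧ d (j + 1) - c (j + 1) ≤ d (j + 1) ∧
      Int.gcd (d (j + 1) - c (j + 1)) (d (j + 1)) = 1) :=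
  stmt5_general m1 m2 a1 a2 δ Δ ha1 ha1m ha2 ha2m hg1 hg2 hδ hδpos hΔ hΔpos d c hd1 hd2 hc1 hc2
    hdrec hcrec j hdj hdj1
end

section
/- Let $X = \begin{pmatrix} a & b \\ c & d \end{pmatrix}$ with $\det X = 1$, and let $R_1 = \begin{pmatrix} 1 & -1 \\ 1 & 0 \end{pmatrix}$, $R_{-1} = \begin{pmatrix} 1 & 1 \\ -1 & 0 \end{pmatrix}$. For a sequence $\underline{i} = (i_1, \dots, i_q)$ with $i_\alpha = \pm 1$, define $R_{\underline{i}} = X R_{i_1} X^t R_{i_2} X R_{i_3} X^t \cdots$ (alternating $X$ and $X^t$, ending with $X$ or $X^t$ according to the parity of $q$). Then the upper-left entry of $R_{\underline{i}}$ is a polynomial in $a$ alone (independent of $b, c, d$ subject to $ad - bc = 1$). -/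
/-- `Rmat 1 = [[1,-1],[1,0]]` and `Rmat (-1) = [[1,1],[-1,0]]`. -/
def Rmat (i : ℤ) : Matrix (Fin 2) (Fin 2) ℤ := !![1, -i; i, 0]

/-- `Rprod X true [i₁,…,i_q] = X * R_{i₁} * Xᵀ * R_{i₂} * X * ⋯`, alternating `X` and `Xᵀ`
and ending with `X` or `Xᵀ` according to the parity of `q`. -/
def Rprod (X : Matrix (Fin 2) (Fin 2) ℤ) : Bool → List ℤ → Matrix (Fin 2) (Fin 2) ℤ
  | b, [] => if b then X else X.transpose
  | b, i :: l => (if b then X else X.transpose) * Rmat i * Rprod X (!b) l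

/-!
If `X 0 0 ≠ 0`, a matrix `X'` with the same upper-left entry and determinant is `L X U` with
`L` lower and `U` upper unitriangular over `ℚ`, and `X'ᵀ = Uᵀ Xᵀ Lᵀ`. Each `Rᵢ` has zero
lower-right entry and skew off-diagonal part, so `V Rᵢ Vᵀ = Rᵢ` for every upper unitriangular
`V`; hence all inner factors of `R_ī(X')` cancel and `R_ī(X') = L R_ī(X) U'` with `U'` upper
unitriangular, and the outer factors `L`, `U'` do not touch the upper-left entry. If `X 0 0 = 0`, the upper-left
entry of every such product vanishes, again because the lower-right entry of `Rᵢ` is zero.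
-/

open Matrix

section Semiring

variable {α : Type*} [Semiring α]

def interlacedProd (X Y : Matrix (Fin 2) (Fin 2) α) :
    List (Matrix (Fin 2) (Fin 2) α) → Matrix (Fin 2) (Fin 2) α
  | [] => X
  | R :: Rs => X * R * interlacedProd Y X Rs

theorem interlacedProd_map {β : Type*} [Semiring β] (f : α →+* β)
    (X Y : Matrix (Fin 2) (Fin 2) α) (Rs : List (Matrix (Fin 2) (Fin 2) α)) :
    (interlacedProd X Y Rs).map f =
      interlacedProd (X.map f) (Y.map f) (Rs.map (Matrix.map · f)) := by
  induction Rs generalizing X Y with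
  | nil => rfl
  | cons R Rs ih => simp [interlacedProd, Matrix.map_mul, ih]

theorem interlacedProd_apply_zero_zero_eq_zero {X Y : Matrix (Fin 2) (Fin 2) α}
    {Rs : List (Matrix (Fin 2) (Fin 2) α)} (hX : X 0 0 = 0) (hY : Y 0 0 = 0)
    (hRs : ∀ R ∈ Rs, R 1 1 = 0) : interlacedProd X Y Rs 0 0 = 0 := by
  induction Rs generalizing X Y with
  | nil => exact hX
  | cons R Rs ih =>
    have hR := hRs R List.mem_cons_self
    have hP := ih hY hX fun R' hR' => hRs R' (List.mem_cons_of_mem R hR')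
    simp [interlacedProd, mul_apply, Fin.sum_univ_two, hX, hR, hP]

end Semiring

section CommRing

variable {α : Type*} [CommRing α]

theorem transpose_transvection (i j : Fin 2) (c : α) :
    (transvection i j c)ᵀ = transvection j i c := by
  simp [transvection, transpose_add]

theorem transvection_mul_mul_transvection {R : Matrix (Fin 2) (Fin 2) α} (h11 : R 1 1 = 0)
    (hskew : R 0 1 + R 1 0 = 0) (c : α) :
    transvection 0 1 c * R * transvection 1 0 c = R := by
  ext i j
  fin_cases i <;> fin_cases j <;>
    simp [transvection, mul_apply, Fin.sum_univ_two, Matrix.add_mul, h11]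
  linear_combination c * hskew

theorem exists_interlacedProd_transvection {Rs : List (Matrix (Fin 2) (Fin 2) α)}
    (hRs : ∀ R ∈ Rs, R 1 1 = 0 ∧ R 0 1 + R 1 0 = 0) (X Y : Matrix (Fin 2) (Fin 2) α)
    (p q : α) :
    ∃ r, interlacedProd (transvection 1 0 p * X * transvection 0 1 q)
        (transvection 1 0 q * Y * transvection 0 1 p) Rs =
      transvection 1 0 p * interlacedProd X Y Rs * transvection 0 1 r := by
  induction Rs generalizing X Y p q with
  | nil => exact ⟨q, rfl⟩
  | cons R Rs ih =>
    obtain ⟨h11, hskew⟩ := hRs R List.mem_cons_self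
    obtain ⟨r, hr⟩ := ih (fun R' hR' => hRs R' (List.mem_cons_of_mem R hR')) Y X q p
    refine ⟨r, ?_⟩
    rw [interlacedProd, interlacedProd, hr]
    calc _ = transvection 1 0 p * X * (transvection 0 1 q * R * transvection 1 0 q) *
          interlacedProd Y X Rs * transvection 0 1 r := by simp only [mul_assoc]
      _ = _ := by rw [transvection_mul_mul_transvection h11 hskew]; simp only [mul_assoc]

end CommRing

section Field

variable {K : Type*} [Field K]

theorem eq_transvection_mul_mul_transvection {X X' : Matrix (Fin 2) (Fin 2) K}
    (h0 : X 0 0 ≠ 0) (ha : X' 0 0 = X 0 0) (hdet : X'.det = X.det) :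
    X' = transvection 1 0 ((X' 1 0 - X 1 0) / X 0 0) * X *
      transvection 0 1 ((X' 0 1 - X 0 1) / X 0 0) := by
  rw [det_fin_two, det_fin_two] at hdet
  ext i j
  fin_cases i <;> fin_cases j <;>
    simp [transvection, mul_apply, Fin.sum_univ_two, Matrix.add_mul]
  · exact ha
  · field_simp; ring
  · field_simp; ring
  · field_simp
    linear_combination hdet - X' 1 1 * ha

theorem interlacedProd_transpose_apply_zero_zero_eq {X X' : Matrix (Fin 2) (Fin 2) K}
    (ha : X' 0 0 = X 0 0) (hdet : X'.det = X.det) {Rs : List (Matrix (Fin 2) (Fin 2) K)}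
    (hRs : ∀ R ∈ Rs, R 1 1 = 0 ∧ R 0 1 + R 1 0 = 0) :
    interlacedProd X' X'ᵀ Rs 0 0 = interlacedProd X Xᵀ Rs 0 0 := by
  by_cases h0 : X 0 0 = 0
  · have hR11 : ∀ R ∈ Rs, R 1 1 = 0 := fun R hR => (hRs R hR).1
    exact (interlacedProd_apply_zero_zero_eq_zero (Y := X'ᵀ) (ha.trans h0) (ha.trans h0)
      hR11).trans (interlacedProd_apply_zero_zero_eq_zero (Y := Xᵀ) h0 h0 hR11).symm
  · have hX' := eq_transvection_mul_mul_transvection h0 ha hdet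
    set t := (X' 1 0 - X 1 0) / X 0 0
    set s := (X' 0 1 - X 0 1) / X 0 0
    have hX't : X'ᵀ = transvection 1 0 s * Xᵀ * transvection 0 1 t := by
      rw [hX', transpose_mul, transpose_mul, transpose_transvection, transpose_transvection,
        mul_assoc]
    obtain ⟨r, hr⟩ := exists_interlacedProd_transvection hRs X Xᵀ t s
    rw [hX't, hX', hr]
    simp

end Field

theorem Rprod_eq_interlacedProd (X : Matrix (Fin 2) (Fin 2) ℤ) (l : List ℤ) (b : Bool) :
    Rprod X b l = interlacedProd (if b then X else Xᵀ) (if b then Xᵀ else X) (l.map Rmat) := by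
  induction l generalizing b with
  | nil => rfl
  | cons i l ih => cases b <;> simp [Rprod, interlacedProd, ih]

theorem stmt15_general (X X' : Matrix (Fin 2) (Fin 2) ℤ) (hX : X.det = 1) (hX' : X'.det = 1)
    (ha : X 0 0 = X' 0 0) (l : List ℤ) :
    Rprod X true l 0 0 = Rprod X' true l 0 0 := by
  have hdet : (X'.map (Int.castRingHom ℚ)).det = (X.map (Int.castRingHom ℚ)).det := by
    simp only [← RingHom.mapMatrix_apply, ← RingHom.map_det, hX, hX']
  have hRmat : ∀ R ∈ (l.map Rmat).map (Matrix.map · (Int.castRingHom ℚ)),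
      R 1 1 = 0 ∧ R 0 1 + R 1 0 = 0 := by
    simp [Rmat]
  have key := interlacedProd_transpose_apply_zero_zero_eq (by simp [ha]) hdet hRmat
  rw [← transpose_map, ← transpose_map, ← interlacedProd_map, ← interlacedProd_map] at key
  apply Int.cast_injective (α := ℚ)
  simpa [Rprod_eq_interlacedProd] using key.symm

/-- Magic lemma, part 1: the upper-left entry of `R_ī = X R_{i₁} Xᵀ R_{i₂} X ⋯` depends
only on the upper-left entry `a` of the determinant-one matrix `X`. -/
theorem stmt15 (X X' : Matrix (Fin 2) (Fin 2) ℤ) (hX : X.det = 1) (hX' : X'.det = 1)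
    (ha : X 0 0 = X' 0 0) (l : List ℤ) (hl : ∀ i ∈ l, i = 1 ∨ i = -1) :
    Rprod X true l 0 0 = Rprod X' true l 0 0 :=
  stmt15_general X X' hX hX' ha l
end

section
/- With notation as in the previous statement, if $q$ is even then the upper-left entry of $R_{\underline{i}}$ equals the upper-left entry of $R_{\underline{j}}$, where $j_\alpha = -i_\alpha$ for all $\alpha$. -/
open Matrix

theorem Matrix.mul_skew_mul_transpose_fin_two {R : Type*} [CommRing R]
    (A : Matrix (Fin 2) (Fin 2) R) : A * !![0, -1; 1, 0] * Aᵀ = A.det • !![0, -1; 1, 0] := by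
  ext i j
  fin_cases i <;> fin_cases j <;>
    simp [Matrix.mul_apply, Fin.sum_univ_two, Matrix.det_fin_two] <;> ring

lemma skew_mulVec_single_zero : !![(0 : ℤ), -1; 1, 0] *ᵥ Pi.single 0 1 = Pi.single 1 1 := by
  ext k
  fin_cases k <;> simp [mulVec, dotProduct, Fin.sum_univ_two]

lemma skew_mulVec_single_one : !![(0 : ℤ), -1; 1, 0] *ᵥ Pi.single 1 1 = -Pi.single 0 1 := by
  ext k
  fin_cases k <;> simp [mulVec, dotProduct, Fin.sum_univ_two]

lemma Rmat_mulVec (i : ℤ) (v : Fin 2 → ℤ) :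
    Rmat i *ᵥ v = v 0 • Pi.single 0 1 + i • (!![0, -1; 1, 0] *ᵥ v) := by
  ext k
  fin_cases k <;> simp [Rmat, mulVec, dotProduct, Fin.sum_univ_two]

def Rfactor (X : Matrix (Fin 2) (Fin 2) ℤ) (b : Bool) : Matrix (Fin 2) (Fin 2) ℤ :=
  if b then X else Xᵀ

lemma Rfactor_apply_zero_zero (X : Matrix (Fin 2) (Fin 2) ℤ) (b : Bool) :
    Rfactor X b 0 0 = X 0 0 := by
  cases b <;> rfl

lemma Rfactor_mul_skew_mul_Rfactor_not {X : Matrix (Fin 2) (Fin 2) ℤ} (hX : X.det = 1)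
    (b : Bool) : Rfactor X b * !![0, -1; 1, 0] * Rfactor X (!b) = !![0, -1; 1, 0] := by
  cases b
  · simpa [Rfactor, hX] using Xᵀ.mul_skew_mul_transpose_fin_two
  · simpa [Rfactor, hX] using X.mul_skew_mul_transpose_fin_two

lemma Rprod_nil (X : Matrix (Fin 2) (Fin 2) ℤ) (b : Bool) : Rprod X b [] = Rfactor X b := by
  cases b <;> rfl

lemma Rprod_cons (X : Matrix (Fin 2) (Fin 2) ℤ) (b : Bool) (i : ℤ) (l : List ℤ) :
    Rprod X b (i :: l) = Rfactor X b * Rmat i * Rprod X (!b) l := by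
  cases b <;> rfl

theorem exists_Rprod_mulVec_single_zero {X : Matrix (Fin 2) (Fin 2) ℤ} (hX : X.det = 1)
    (l : List ℤ) (b : Bool) : ∃ t s : ℤ,
      Rprod X b l *ᵥ Pi.single 0 1 = t • (Rfactor X b *ᵥ Pi.single 0 1) + s • Pi.single 1 1 ∧
      Rprod X b (l.map (fun i => -i)) *ᵥ Pi.single 0 1 =
        t • (Rfactor X b *ᵥ Pi.single 0 1) - s • Pi.single 1 1 := by
  induction l generalizing b with
  | nil => exact ⟨1, 0, by simp [Rprod_nil]⟩
  | cons i l ih =>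
    obtain ⟨t, s, hv, hw⟩ := ih (!b)
    have hv0 : (Rprod X (!b) l *ᵥ Pi.single 0 1) 0 = t * X 0 0 := by
      simp [hv, Rfactor_apply_zero_zero]
    have hw0 : (Rprod X (!b) (l.map (fun i => -i)) *ᵥ Pi.single 0 1) 0 = t * X 0 0 := by
      simp [hw, Rfactor_apply_zero_zero]
    have hJ : Rfactor X b *ᵥ (!![0, -1; 1, 0] *ᵥ (Rfactor X (!b) *ᵥ Pi.single 0 1)) =
        Pi.single 1 1 := by
      rw [mulVec_mulVec, mulVec_mulVec, Rfactor_mul_skew_mul_Rfactor_not hX,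
        skew_mulVec_single_zero]
    refine ⟨t * X 0 0 - i * s, i * t, ?_, ?_⟩
    · rw [Rprod_cons, ← mulVec_mulVec, ← mulVec_mulVec, Rmat_mulVec, hv0, hv]
      simp only [mulVec_add, mulVec_smul, skew_mulVec_single_one, mulVec_neg, hJ]
      module
    · rw [List.map_cons, Rprod_cons, ← mulVec_mulVec, ← mulVec_mulVec, Rmat_mulVec, hw0, hw]
      simp only [mulVec_add, mulVec_sub, mulVec_smul, skew_mulVec_single_one, mulVec_neg, hJ]
      module

theorem stmt16_general (X : Matrix (Fin 2) (Fin 2) ℤ) (hX : X.det = 1) (l : List ℤ) :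
    Rprod X true l 0 0 = Rprod X true (l.map (fun i => -i)) 0 0 := by
  obtain ⟨t, s, hv, hw⟩ := exists_Rprod_mulVec_single_zero hX l true
  have hv0 : Rprod X true l 0 0 = t * X 0 0 := by simpa [Rfactor] using congrFun hv 0
  have hw0 : Rprod X true (l.map (fun i => -i)) 0 0 = t * X 0 0 := by
    simpa [Rfactor] using congrFun hw 0
  rw [hv0, hw0]

/-- Magic lemma, part 2: for an even-length sign sequence, negating all signs does not
change the upper-left entry of `R_ī`. -/
theorem stmt16 (X : Matrix (Fin 2) (Fin 2) ℤ) (hX : X.det = 1) (l : List ℤ)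
    (hl : ∀ i ∈ l, i = 1 ∨ i = -1) (hlen : Even l.length) :
    Rprod X true l 0 0 = Rprod X true (l.map (fun i => -i)) 0 0 :=
  stmt16_general X hX l
end

section
/- Let $s = 2l + 1$ be odd, $\mu$ a primitive $s$-th root of unity, $k \in \mathbb{Z}_s \setminus \{0\}$, and suppose $l \notin \langle 2k \rangle \subset \mathbb{Z}_s$. Let $\alpha$ be the minimal positive integer with $2k\alpha \equiv -k \pmod s$. Then $-2\sum_{j=1}^{\alpha} (\mu^{2kj} + \mu^{2kj + l}) = \frac{2\mu^k}{\mu^k + 1}(1 + \mu^l)$. -/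
/-!
Put `t = μ ^ k`. The congruence `2kα ≡ -k` says `t ^ (2α + 1) = 1`, and `t² ≠ 1` because `s` is odd
and does not divide `k`. The sum is `(1 + μ ^ l)` times the geometric sum `∑_{j=1}^α t^{2j}`,
which equals `t² (t⁻¹ - 1) / (t² - 1) = -t / (t + 1)`.
-/

open Finset

theorem sum_Icc_one_sq_pow_eq_neg_div {K : Type*} [Field K] {t : K} {α : ℕ}
    (ht : t ^ 2 ≠ 1) (hα : t ^ (2 * α + 1) = 1) :
    ∑ j ∈ Icc 1 α, (t ^ 2) ^ j = -t / (t + 1) := by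
  have ht2 : t + 1 ≠ 0 := fun h => ht (by rw [eq_neg_of_add_eq_zero_left h]; ring)
  rw [← Finset.Ico_add_one_right_eq_Icc, geom_sum_Ico ht (by omega),
    div_eq_div_iff (sub_ne_zero.mpr ht) ht2]
  linear_combination (t ^ 2 + t) * hα

theorem IsPrimitiveRoot.sq_pow_ne_one_of_odd {M : Type*} [CommMonoid M] {μ : M} {s k : ℕ}
    (hμ : IsPrimitiveRoot μ s) (hs : Odd s) (hk : ¬ s ∣ k) : (μ ^ k) ^ 2 ≠ 1 := by
  rw [← pow_mul, Ne, hμ.pow_eq_one_iff_dvd]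
  exact fun h => hk (Nat.Coprime.dvd_of_dvd_mul_right (Nat.coprime_two_right.mpr hs) h)

theorem stmt17_general (s l k α : ℕ) (hs : s = 2 * l + 1)
    (μ : ℂ) (hμ : IsPrimitiveRoot μ s)
    (hk : (k : ZMod s) ≠ 0)
    (hα2 : ((2 * k * α : ℕ) : ZMod s) = -(k : ZMod s)) :
    -2 * ∑ j ∈ Finset.Icc 1 α, (μ ^ (2 * k * j) + μ ^ (2 * k * j + l)) =
      2 * μ ^ k / (μ ^ k + 1) * (1 + μ ^ l) := by
  have ht : (μ ^ k) ^ 2 ≠ 1 :=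
    hμ.sq_pow_ne_one_of_odd ⟨l, hs⟩ fun h => hk ((ZMod.natCast_eq_zero_iff k s).mpr h)
  have hrel : (μ ^ k) ^ (2 * α + 1) = 1 := by
    rw [← pow_mul, hμ.pow_eq_one_iff_dvd, ← ZMod.natCast_eq_zero_iff]
    push_cast at hα2 ⊢
    linear_combination hα2
  have hsum : ∑ j ∈ Icc 1 α, (μ ^ (2 * k * j) + μ ^ (2 * k * j + l)) =
      (1 + μ ^ l) * ∑ j ∈ Icc 1 α, ((μ ^ k) ^ 2) ^ j := by
    rw [mul_sum]
    refine sum_congr rfl fun j _ => ?_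
    rw [← pow_mul, ← pow_mul, pow_add]
    ring_nf
  rw [hsum, sum_Icc_one_sq_pow_eq_neg_div ht hrel]
  ring

/-- The Gauss sum computation in the proof that a sequence of WW type admits at most two
compatible triangulations: for `s = 2l+1` odd, `μ` a primitive `s`-th root of unity,
`k ≠ 0` in `ℤ/s` with `l ∉ ⟨2k⟩`, and `α` minimal positive with `2kα ≡ -k (mod s)`,
`-2 ∑_{j=1}^α (μ^{2kj} + μ^{2kj+l}) = (2μ^k/(μ^k+1)) (1+μ^l)`. -/
theorem stmt17 (s l k α : ℕ) (hs : s = 2 * l + 1)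
    (μ : ℂ) (hμ : IsPrimitiveRoot μ s)
    (hk : (k : ZMod s) ≠ 0)
    (hl : (l : ZMod s) ∉ AddSubgroup.zmultiples ((2 * k : ℕ) : ZMod s))
    (hα : 0 < α) (hα2 : ((2 * k * α : ℕ) : ZMod s) = -(k : ZMod s))
    (hαmin : ∀ β, 0 < β → β < α → ((2 * k * β : ℕ) : ZMod s) ≠ -(k : ZMod s)) :
    -2 * ∑ j ∈ Finset.Icc 1 α, (μ ^ (2 * k * j) + μ ^ (2 * k * j + l)) =
      2 * μ ^ k / (μ ^ k + 1) * (1 + μ ^ l) :=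
  stmt17_general s l k α hs μ hμ hk hα2
end
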